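/- Under the list-experiment model with misreporting (Assumptions 1 and 2), if the misreporting probabilities in the two groups are equal, p₀ = p₁ = p, then the mean difference of observed responses satisfies E(Y₁) − E(Y₀) = δ + p·(1−2δ)/2, where E(Y₀) = ∑_{j=0}^{J} j·P₀(j) and E(Y₁) = ∑_{j=0}^{J+1} j·P₁(j). (Corollary 1, equal misreporting probabilities.) -/

import Mathlib

/-!
Both observed distributions are mixtures `(1 - p) • Q + p • uniform` on `{0, …, n}`, so their
means are `(1 - p) · mean Q + p · n / 2`. Shifting the latent distribution by one with weight `δ`
raises its mean by `δ`, so the two means differ by `(1 - p) · δ + p · ((J + 1) - J) / 2`.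
-/

open Finset

lemma sum_Icc_add_one_right_of_eq_zero {M : Type*} [AddCommMonoid M] (f : ℤ → M) {n : ℤ}
    (hn : 0 ≤ n) (hf : f (n + 1) = 0) :
    ∑ j ∈ Icc (0 : ℤ) (n + 1), f j = ∑ j ∈ Icc (0 : ℤ) n, f j := by
  rw [← insert_Icc_right_eq_Icc_add_one (by omega), sum_insert (by simp), hf, zero_add]

lemma sum_Icc_zero_intCast (n : ℕ) : ∑ j ∈ Icc (0 : ℤ) n, (j : ℝ) = n * (n + 1) / 2 := by
  induction n with
  | zero => simp
  | succ k ih =>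
    rw [Nat.cast_succ, ← insert_Icc_right_eq_Icc_add_one (by omega), sum_insert (by simp), ih]
    push_cast
    ring

lemma sum_Icc_mul_comp_sub_one (f : ℤ → ℝ) {n : ℤ} (hn : 0 ≤ n) :
    ∑ j ∈ Icc (0 : ℤ) (n + 1), (j : ℝ) * f (j - 1) =
      ∑ j ∈ Icc (0 : ℤ) n, (j : ℝ) * f j + ∑ j ∈ Icc (0 : ℤ) n, f j := by
  rw [← insert_Icc_add_one_left_eq_Icc (by omega), sum_insert (by simp), Int.cast_zero, zero_mul,
    zero_add, ← map_add_right_Icc 0 n 1, sum_map, ← sum_add_distrib]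
  refine sum_congr rfl fun j _ => ?_
  simp only [addRightEmbedding_apply, add_sub_cancel_right, Int.cast_add, Int.cast_one]
  ring

lemma sum_Icc_mul_uniform_mixture (n : ℕ) (p : ℝ) (Q R : ℤ → ℝ)
    (hR : ∀ j : ℤ, 0 ≤ j → j ≤ n → R j = (1 - p) * Q j + p / ((n : ℝ) + 1)) :
    ∑ j ∈ Icc (0 : ℤ) n, (j : ℝ) * R j = (1 - p) * ∑ j ∈ Icc (0 : ℤ) n, (j : ℝ) * Q j + p * n / 2 := by
  have hexpand : ∀ j ∈ Icc (0 : ℤ) n,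
      (j : ℝ) * R j = (1 - p) * ((j : ℝ) * Q j) + p / ((n : ℝ) + 1) * j := by
    intro j hj
    rw [mem_Icc] at hj
    rw [hR j hj.1 hj.2]
    ring
  rw [sum_congr rfl hexpand, sum_add_distrib, ← mul_sum, ← mul_sum, sum_Icc_zero_intCast]
  field_simp

lemma sum_Icc_mul_shift_mixture (J : ℕ) (P : ℤ → ℝ) (hPtop : P (J + 1) = 0)
    (hPsum : ∑ j ∈ Icc (0 : ℤ) J, P j = 1) (δ : ℝ) :
    ∑ j ∈ Icc (0 : ℤ) (J + 1), (j : ℝ) * (δ * P (j - 1) + (1 - δ) * P j) =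
      ∑ j ∈ Icc (0 : ℤ) J, (j : ℝ) * P j + δ := by
  have hJ : (0 : ℤ) ≤ J := by positivity
  have hsplit : ∀ j : ℤ, (j : ℝ) * (δ * P (j - 1) + (1 - δ) * P j) =
      δ * ((j : ℝ) * P (j - 1)) + (1 - δ) * ((j : ℝ) * P j) := fun j => by ring
  simp only [hsplit, sum_add_distrib, ← mul_sum]
  rw [sum_Icc_mul_comp_sub_one P hJ, hPsum,
    sum_Icc_add_one_right_of_eq_zero (fun j : ℤ => (j : ℝ) * P j) hJ (by simp [hPtop])]
  ring

theorem list_experiment_mean_difference_equal_misreporting_general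
    (J : ℕ)
    (P : ℤ → ℝ)
    (hPzero : ∀ j : ℤ, j < 0 ∨ (J : ℤ) < j → P j = 0)
    (hPsum : ∑ j ∈ Finset.Icc (0 : ℤ) (J : ℤ), P j = 1)
    (δ p : ℝ)
    (P₀ P₁ : ℤ → ℝ)
    (hP₀ : ∀ j : ℤ, 0 ≤ j → j ≤ (J : ℤ) →
      P₀ j = (1 - p) * P j + p / ((J : ℝ) + 1))
    (hP₁ : ∀ j : ℤ, 0 ≤ j → j ≤ (J : ℤ) + 1 →
      P₁ j = (1 - p) * (δ * P (j - 1) + (1 - δ) * P j) + p / ((J : ℝ) + 2)) :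
    (∑ j ∈ Finset.Icc (0 : ℤ) ((J : ℤ) + 1), (j : ℝ) * P₁ j) -
        (∑ j ∈ Finset.Icc (0 : ℤ) (J : ℤ), (j : ℝ) * P₀ j) =
      δ + p * (1 - 2 * δ) / 2 := by
  have hE₀ := sum_Icc_mul_uniform_mixture J p P P₀ hP₀
  have hE₁ := sum_Icc_mul_uniform_mixture (J + 1) p (fun j => δ * P (j - 1) + (1 - δ) * P j) P₁
    (fun j hj₀ hj₁ => by push_cast at hj₁ ⊢; rw [hP₁ j hj₀ hj₁]; ring)
  push_cast at hE₁
  rw [hE₁, hE₀, sum_Icc_mul_shift_mixture J P (hPzero _ (by omega)) hPsum δ]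
  ring

/-- Corollary 1 (equal misreporting probabilities): if `p₀ = p₁ = p` then
`E(Y₁) − E(Y₀) = δ + p·(1−2δ)/2`. -/
theorem list_experiment_mean_difference_equal_misreporting
    (J : ℕ) (hJ : 1 ≤ J)
    (P : ℤ → ℝ)
    (hPzero : ∀ j : ℤ, j < 0 ∨ (J : ℤ) < j → P j = 0)
    (hPnonneg : ∀ j : ℤ, 0 ≤ P j)
    (hPsum : ∑ j ∈ Finset.Icc (0 : ℤ) (J : ℤ), P j = 1)
    (δ p : ℝ)
    (hδ : 0 ≤ δ ∧ δ ≤ 1) (hp : 0 ≤ p ∧ p < 1)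
    (P₀ P₁ : ℤ → ℝ)
    (hP₀ : ∀ j : ℤ, 0 ≤ j → j ≤ (J : ℤ) →
      P₀ j = (1 - p) * P j + p / ((J : ℝ) + 1))
    (hP₁ : ∀ j : ℤ, 0 ≤ j → j ≤ (J : ℤ) + 1 →
      P₁ j = (1 - p) * (δ * P (j - 1) + (1 - δ) * P j) + p / ((J : ℝ) + 2)) :
    (∑ j ∈ Finset.Icc (0 : ℤ) ((J : ℤ) + 1), (j : ℝ) * P₁ j) -
        (∑ j ∈ Finset.Icc (0 : ℤ) (J : ℤ), (j : ℝ) * P₀ j) =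
      δ + p * (1 - 2 * δ) / 2 :=
  list_experiment_mean_difference_equal_misreporting_general J P hPzero hPsum δ p P₀ P₁ hP₀ hP₁
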